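/- Define Q(k,θ) = log(1 + sin(θ/2)·sin(kθ/2)/sin²((1-k)θ/4)) / log(1 + sin(kπ/2)/sin²((1-k)π/4)) for 0 < k < 1 and 0 < θ < 2π. Then 1 ≤ Q(k,θ) ≤ (π·sin(θ/2)/θ)² if 0 < θ < π, and (π·sin(θ/2)/θ)² ≤ Q(k,θ) ≤ 1 if π < θ < 2π. -/

import Mathlib

open Real

noncomputable def Q (k θ : ℝ) : ℝ :=
  Real.log (1 + Real.sin (θ / 2) * Real.sin (k * θ / 2) / (Real.sin ((1 - k) * θ / 4))^2) /
    Real.log (1 + Real.sin (k * Real.pi / 2) / (Real.sin ((1 - k) * Real.pi / 4))^2)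

/-!
With `x = (1 + k) θ / 4` and `y = (1 - k) θ / 4` we have `sin (θ/2) sin (kθ/2) = sin² x - sin² y`,
so the numerator of `Q k θ` is `2 N(θ)` with `N(θ) = log sin x - log sin y`, and
`Q k θ = N(θ) / N(π)`.
Differentiating in `k` writes `N(θ) = ∫₀ᵏ (θ/4) (cot ((1+s)θ/4) + cot ((1-s)θ/4)) ds`.
Since `t cot t` decreases on `(0, π)`, the integrand, hence `N`, decreases in `θ`.
Since `cot a + cot b = sin (a + b) / (sin a sin b)`, the integrand times `(θ / sin (θ/2))²` is
`(θ / sin (θ/2)) (θ / sin ((1+s)θ/4)) (θ / sin ((1-s)θ/4)) / 4`, a product of increasing functions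
because `sin t / t` decreases on `(0, π]` (concavity of `sin`). Comparing `θ` with `π` in both
monotonicity statements gives the four inequalities.
-/

open Set

lemma sin_div_le_sin_div {x y : ℝ} (hx : 0 < x) (hxy : x ≤ y) (hy : y ≤ π) :
    sin y / y ≤ sin x / x := by
  have h := strictConcaveOn_sin_Icc.concaveOn.neg.secant_mono (a := 0) ⟨le_rfl, pi_pos.le⟩
    ⟨hx.le, hxy.trans hy⟩ ⟨hx.le.trans hxy, hy⟩ hx.ne' (hx.trans_le hxy).ne' hxy
  simp only [Pi.neg_apply, sin_zero, neg_zero, sub_zero, neg_div] at h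
  linarith

lemma div_sin_mul_le_div_sin_mul {c x y : ℝ} (hc : 0 < c) (hx : 0 < x) (hxy : x ≤ y)
    (hy : c * y < π) : x / sin (c * x) ≤ y / sin (c * y) := by
  have hcx : 0 < c * x := mul_pos hc hx
  have hcxy : c * x ≤ c * y := by gcongr
  have h := sin_div_le_sin_div hcx hcxy hy.le
  rw [div_le_div_iff₀ (hcx.trans_le hcxy) hcx] at h
  rw [div_le_div_iff₀ (sin_pos_of_pos_of_lt_pi hcx (hcxy.trans_lt hy))
    (sin_pos_of_pos_of_lt_pi (hcx.trans_le hcxy) hy)]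
  nlinarith

lemma strictAntiOn_mul_cot : StrictAntiOn (fun x => x * cot x) (Ioo 0 π) := by
  simp_rw [cot_eq_cos_div_sin, ← mul_div_assoc]
  apply strictAntiOn_of_deriv_neg (convex_Ioo 0 π)
  · exact ContinuousOn.div (by fun_prop) (by fun_prop)
      fun x hx => (sin_pos_of_pos_of_lt_pi hx.1 hx.2).ne'
  · intro x hx
    rw [interior_Ioo] at hx
    have hs : 0 < sin x := sin_pos_of_pos_of_lt_pi hx.1 hx.2
    have hd : HasDerivAt (fun x => x * cos x / sin x)
        (((1 * cos x + x * -sin x) * sin x - x * cos x * cos x) / sin x ^ 2) x :=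
      ((hasDerivAt_id x).mul (hasDerivAt_cos x)).div (hasDerivAt_sin x) hs.ne'
    rw [hd.deriv]
    apply div_neg_of_neg_of_pos _ (by positivity)
    have h2 := sin_lt (x := 2 * x) (by linarith [hx.1])
    rw [sin_two_mul] at h2
    linear_combination (exp := 1) h2 / 2 - x * sin_sq_add_cos_sq x

lemma cot_add_cot {x y : ℝ} (hx : sin x ≠ 0) (hy : sin y ≠ 0) :
    cot x + cot y = sin (x + y) / (sin x * sin y) := by
  rw [cot_eq_cos_div_sin, cot_eq_cos_div_sin, div_add_div _ _ hx hy, sin_add]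
  ring

lemma sin_add_mul_sin_sub (x y : ℝ) : sin (x + y) * sin (x - y) = sin x ^ 2 - sin y ^ 2 := by
  rw [sin_add, sin_sub]
  linear_combination sin x ^ 2 * sin_sq_add_cos_sq y - sin y ^ 2 * sin_sq_add_cos_sq x

noncomputable def logSinRatio (k θ : ℝ) : ℝ :=
  log (sin ((1 + k) * θ / 4)) - log (sin ((1 - k) * θ / 4))

noncomputable def cotSum (θ s : ℝ) : ℝ :=
  θ / 4 * (cot ((1 + s) * θ / 4) + cot ((1 - s) * θ / 4))

lemma mul_div_four_mem_Ioo {a θ : ℝ} (ha : 0 < a) (ha' : a < 2) (hθ : 0 < θ) (hθ' : θ < 2 * π) :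
    a * θ / 4 ∈ Ioo 0 π :=
  ⟨by positivity, by nlinarith⟩

lemma sin_mul_div_four_pos {a θ : ℝ} (ha : 0 < a) (ha' : a < 2) (hθ : 0 < θ)
    (hθ' : θ < 2 * π) : 0 < sin (a * θ / 4) :=
  have h := mul_div_four_mem_Ioo ha ha' hθ hθ'
  sin_pos_of_pos_of_lt_pi h.1 h.2

section
variable {k θ : ℝ}

lemma log_one_add_eq_two_mul_logSinRatio (hp : sin ((1 + k) * θ / 4) ≠ 0)
    (hm : sin ((1 - k) * θ / 4) ≠ 0) :
    log (1 + sin (θ / 2) * sin (k * θ / 2) / sin ((1 - k) * θ / 4) ^ 2) =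
      2 * logSinRatio k θ := by
  have h : sin (θ / 2) * sin (k * θ / 2) =
      sin ((1 + k) * θ / 4) ^ 2 - sin ((1 - k) * θ / 4) ^ 2 := by
    rw [← sin_add_mul_sin_sub]
    ring_nf
  have h' : 1 + sin (θ / 2) * sin (k * θ / 2) / sin ((1 - k) * θ / 4) ^ 2 =
      sin ((1 + k) * θ / 4) ^ 2 / sin ((1 - k) * θ / 4) ^ 2 := by
    rw [h, sub_div, div_self (pow_ne_zero 2 hm)]
    ring
  rw [h', log_div (pow_ne_zero 2 hp) (pow_ne_zero 2 hm), log_pow, log_pow, logSinRatio]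
  push_cast
  ring

lemma logSinRatio_pos (hk : 0 < k) (hk' : k < 1) (hθ : 0 < θ) (hθ' : θ < 2 * π) :
    0 < logSinRatio k θ := by
  have hθ₂ : 0 < sin (θ / 2) := sin_pos_of_pos_of_lt_pi (by positivity) (by linarith)
  have hk₂ : 0 < sin (k * θ / 2) := sin_pos_of_pos_of_lt_pi (by positivity) (by nlinarith)
  have hp := sin_mul_div_four_pos (a := 1 + k) (by linarith) (by linarith) hθ hθ'
  have hm := sin_mul_div_four_pos (a := 1 - k) (by linarith) (by linarith) hθ hθ'
  have h := log_pos (lt_add_of_pos_right 1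
    (by positivity : 0 < sin (θ / 2) * sin (k * θ / 2) / sin ((1 - k) * θ / 4) ^ 2))
  rw [log_one_add_eq_two_mul_logSinRatio hp.ne' hm.ne'] at h
  linarith

lemma Q_eq_logSinRatio_div (hk : -1 < k) (hk' : k < 1) (hθ : 0 < θ) (hθ' : θ < 2 * π) :
    Q k θ = logSinRatio k θ / logSinRatio k π := by
  have hπ : π < 2 * π := by linarith [pi_pos]
  have hp (t) (ht : 0 < t) (ht' : t < 2 * π) := sin_mul_div_four_pos (a := 1 + k)
    (by linarith) (by linarith) ht ht'
  have hm (t) (ht : 0 < t) (ht' : t < 2 * π) := sin_mul_div_four_pos (a := 1 - k)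
    (by linarith) (by linarith) ht ht'
  -- the denominator of `Q` is its numerator at `θ = π`
  have hπk : sin (k * π / 2) = sin (π / 2) * sin (k * π / 2) := by rw [sin_pi_div_two, one_mul]
  rw [Q, hπk, log_one_add_eq_two_mul_logSinRatio (hp θ hθ hθ').ne' (hm θ hθ hθ').ne',
    log_one_add_eq_two_mul_logSinRatio (hp π pi_pos hπ).ne' (hm π pi_pos hπ).ne',
    mul_div_mul_left _ _ two_ne_zero]

lemma hasDerivAt_logSinRatio {s : ℝ} (hp : sin ((1 + s) * θ / 4) ≠ 0)
    (hm : sin ((1 - s) * θ / 4) ≠ 0) :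
    HasDerivAt (fun k => logSinRatio k θ) (cotSum θ s) s := by
  have dp : HasDerivAt (fun k => (1 + k) * θ / 4) (θ / 4) s := by
    simpa using (((hasDerivAt_id s).const_add 1).mul_const θ).div_const 4
  have dm : HasDerivAt (fun k => (1 - k) * θ / 4) (-(θ / 4)) s := by
    simpa [neg_div] using (((hasDerivAt_id s).const_sub 1).mul_const θ).div_const 4
  refine ((dp.sin.log hp).sub (dm.sin.log hm)).congr_deriv ?_
  rw [cotSum, cot_eq_cos_div_sin, cot_eq_cos_div_sin]
  ring

lemma continuousOn_cotSum (hθ : 0 < θ) (hθ' : θ < 2 * π) :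
    ContinuousOn (cotSum θ) (Ioo (-1) 1) := by
  have hp (s) (hs : s ∈ Ioo (-1 : ℝ) 1) := sin_mul_div_four_pos (a := 1 + s)
    (by linarith [hs.1]) (by linarith [hs.2]) hθ hθ'
  have hm (s) (hs : s ∈ Ioo (-1 : ℝ) 1) := sin_mul_div_four_pos (a := 1 - s)
    (by linarith [hs.2]) (by linarith [hs.1]) hθ hθ'
  unfold cotSum
  simp only [cot_eq_cos_div_sin]
  exact continuousOn_const.mul <|
    (ContinuousOn.div (by fun_prop) (by fun_prop) fun s hs => (hp s hs).ne').add
    (ContinuousOn.div (by fun_prop) (by fun_prop) fun s hs => (hm s hs).ne')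

lemma intervalIntegrable_cotSum (hk : -1 < k) (hk' : k < 1) (hθ : 0 < θ) (hθ' : θ < 2 * π) :
    IntervalIntegrable (cotSum θ) MeasureTheory.volume 0 k :=
  ((continuousOn_cotSum hθ hθ').mono
    (ordConnected_Ioo.uIcc_subset (by norm_num) ⟨hk, hk'⟩)).intervalIntegrable

lemma integral_cotSum (hk : -1 < k) (hk' : k < 1) (hθ : 0 < θ) (hθ' : θ < 2 * π) :
    ∫ s in (0 : ℝ)..k, cotSum θ s = logSinRatio k θ := by
  have hderiv (s) (hs : s ∈ uIcc 0 k) : HasDerivAt (fun k => logSinRatio k θ) (cotSum θ s) s := by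
    have hs' := ordConnected_Ioo.uIcc_subset (by norm_num) ⟨hk, hk'⟩ hs
    exact hasDerivAt_logSinRatio
      (sin_mul_div_four_pos (by linarith [hs'.1]) (by linarith [hs'.2]) hθ hθ').ne'
      (sin_mul_div_four_pos (by linarith [hs'.2]) (by linarith [hs'.1]) hθ hθ').ne'
  rw [intervalIntegral.integral_eq_sub_of_hasDerivAt hderiv
    (intervalIntegrable_cotSum hk hk' hθ hθ')]
  simp [logSinRatio]

lemma cotSum_le_cotSum {s θ₁ θ₂ : ℝ} (hs : -1 < s) (hs' : s < 1) (hθ₁ : 0 < θ₁) (hθ : θ₁ ≤ θ₂)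
    (hθ₂ : θ₂ < 2 * π) : cotSum θ₂ s ≤ cotSum θ₁ s := by
  have hp : 0 < 1 + s := by linarith
  have hm : 0 < 1 - s := by linarith
  have e (θ : ℝ) : cotSum θ s = (1 + s)⁻¹ * ((1 + s) * θ / 4 * cot ((1 + s) * θ / 4)) +
      (1 - s)⁻¹ * ((1 - s) * θ / 4 * cot ((1 - s) * θ / 4)) := by
    rw [cotSum]
    field_simp
  have anti {a : ℝ} (ha : 0 < a) (ha' : a < 2) :
      a * θ₂ / 4 * cot (a * θ₂ / 4) ≤ a * θ₁ / 4 * cot (a * θ₁ / 4) :=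
    strictAntiOn_mul_cot.antitoneOn (mul_div_four_mem_Ioo ha ha' hθ₁ (hθ.trans_lt hθ₂))
      (mul_div_four_mem_Ioo ha ha' (hθ₁.trans_le hθ) hθ₂) (by gcongr)
  rw [e, e]
  exact add_le_add (mul_le_mul_of_nonneg_left (anti hp (by linarith)) (inv_nonneg.2 hp.le))
    (mul_le_mul_of_nonneg_left (anti hm (by linarith)) (inv_nonneg.2 hm.le))

lemma sq_div_sin_mul_cotSum {s : ℝ} (h₂ : sin (θ / 2) ≠ 0) (hp : sin ((1 + s) * θ / 4) ≠ 0)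
    (hm : sin ((1 - s) * θ / 4) ≠ 0) :
    (θ / sin (θ / 2)) ^ 2 * cotSum θ s =
      θ / sin (θ / 2) * (θ / sin ((1 + s) * θ / 4)) * (θ / sin ((1 - s) * θ / 4)) / 4 := by
  rw [cotSum, cot_add_cot hp hm, show (1 + s) * θ / 4 + (1 - s) * θ / 4 = θ / 2 by ring]
  field_simp

lemma sq_div_sin_mul_cotSum_le {s θ₁ θ₂ : ℝ} (hs : -1 < s) (hs' : s < 1) (hθ₁ : 0 < θ₁)
    (hθ : θ₁ ≤ θ₂) (hθ₂ : θ₂ < 2 * π) :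
    (θ₁ / sin (θ₁ / 2)) ^ 2 * cotSum θ₁ s ≤ (θ₂ / sin (θ₂ / 2)) ^ 2 * cotSum θ₂ s := by
  have hθ₁' : θ₁ < 2 * π := hθ.trans_lt hθ₂
  have hθ₂' : 0 < θ₂ := hθ₁.trans_le hθ
  have h₂ (t) (ht : 0 < t) (ht' : t < 2 * π) : 0 < sin (t / 2) :=
    sin_pos_of_pos_of_lt_pi (by positivity) (by linarith)
  have hp (t) (ht : 0 < t) (ht' : t < 2 * π) : 0 < sin ((1 + s) * t / 4) :=
    sin_mul_div_four_pos (by linarith) (by linarith) ht ht'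
  have hm (t) (ht : 0 < t) (ht' : t < 2 * π) : 0 < sin ((1 - s) * t / 4) :=
    sin_mul_div_four_pos (by linarith) (by linarith) ht ht'
  rw [sq_div_sin_mul_cotSum (h₂ θ₁ hθ₁ hθ₁').ne' (hp θ₁ hθ₁ hθ₁').ne' (hm θ₁ hθ₁ hθ₁').ne',
    sq_div_sin_mul_cotSum (h₂ θ₂ hθ₂' hθ₂).ne' (hp θ₂ hθ₂' hθ₂).ne' (hm θ₂ hθ₂' hθ₂).ne']
  have := h₂ θ₁ hθ₁ hθ₁'
  have := hp θ₁ hθ₁ hθ₁'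
  have := hm θ₁ hθ₁ hθ₁'
  have := h₂ θ₂ hθ₂' hθ₂
  have := hp θ₂ hθ₂' hθ₂
  gcongr ?_ * ?_ * ?_ / 4
  · simpa only [div_mul_eq_mul_div, one_mul] using
      div_sin_mul_le_div_sin_mul (c := 1 / 2) (by norm_num) hθ₁ hθ (by linarith)
  · simpa only [div_mul_eq_mul_div] using
      div_sin_mul_le_div_sin_mul (c := (1 + s) / 4) (by linarith) hθ₁ hθ
        (by linarith [(mul_div_four_mem_Ioo (a := 1 + s) (by linarith) (by linarith) hθ₂' hθ₂).2])
  · simpa only [div_mul_eq_mul_div] using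
      div_sin_mul_le_div_sin_mul (c := (1 - s) / 4) (by linarith) hθ₁ hθ
        (by linarith [(mul_div_four_mem_Ioo (a := 1 - s) (by linarith) (by linarith) hθ₂' hθ₂).2])

lemma logSinRatio_antitoneOn (hk : 0 ≤ k) (hk' : k < 1) :
    AntitoneOn (logSinRatio k) (Ioo 0 (2 * π)) := by
  intro θ₁ h₁ θ₂ h₂ hθ
  have hk₁ : -1 < k := by linarith
  rw [← integral_cotSum hk₁ hk' h₁.1 h₁.2, ← integral_cotSum hk₁ hk' h₂.1 h₂.2]
  exact intervalIntegral.integral_mono_on hk (intervalIntegrable_cotSum hk₁ hk' h₂.1 h₂.2)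
    (intervalIntegrable_cotSum hk₁ hk' h₁.1 h₁.2)
    fun s hs => cotSum_le_cotSum (by linarith [hs.1]) (by linarith [hs.2]) h₁.1 hθ h₂.2

lemma sq_div_sin_mul_logSinRatio_monotoneOn (hk : 0 ≤ k) (hk' : k < 1) :
    MonotoneOn (fun θ => (θ / sin (θ / 2)) ^ 2 * logSinRatio k θ) (Ioo 0 (2 * π)) := by
  intro θ₁ h₁ θ₂ h₂ hθ
  have hk₁ : -1 < k := by linarith
  dsimp only
  rw [← integral_cotSum hk₁ hk' h₁.1 h₁.2, ← integral_cotSum hk₁ hk' h₂.1 h₂.2,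
    ← intervalIntegral.integral_const_mul, ← intervalIntegral.integral_const_mul]
  exact intervalIntegral.integral_mono_on hk
    ((intervalIntegrable_cotSum hk₁ hk' h₁.1 h₁.2).const_mul _)
    ((intervalIntegrable_cotSum hk₁ hk' h₂.1 h₂.2).const_mul _)
    fun s hs => sq_div_sin_mul_cotSum_le (by linarith [hs.1]) (by linarith [hs.2]) h₁.1 hθ h₂.2

end

theorem stmt17 (k θ : ℝ) (hk1 : 0 < k) (hk2 : k < 1) (hθ1 : 0 < θ) (hθ2 : θ < 2 * Real.pi) :
    (θ < Real.pi → 1 ≤ Q k θ ∧ Q k θ ≤ (Real.pi * Real.sin (θ / 2) / θ)^2) ∧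
    (Real.pi < θ → (Real.pi * Real.sin (θ / 2) / θ)^2 ≤ Q k θ ∧ Q k θ ≤ 1) := by
  have hπ : π ∈ Ioo 0 (2 * π) := ⟨pi_pos, by linarith [pi_pos]⟩
  have hθ : θ ∈ Ioo 0 (2 * π) := ⟨hθ1, hθ2⟩
  set g := fun t => (t / sin (t / 2)) ^ 2 * logSinRatio k t
  have hNθ := logSinRatio_pos hk1 hk2 hθ1 hθ2
  have hNπ := logSinRatio_pos hk1 hk2 hπ.1 hπ.2
  have hgθ : 0 < g θ := mul_pos (pow_pos (div_pos hθ1 (sin_pos_of_pos_of_lt_pi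
    (by positivity) (by linarith))) 2) hNθ
  have hQ := Q_eq_logSinRatio_div (by linarith) hk2 hθ1 hθ2
  have hbound : (π * sin (θ / 2) / θ) ^ 2 = Q k θ * (g π / g θ) := by
    simp only [g, hQ, sin_pi_div_two]
    field_simp
  rw [hbound, hQ]
  have hQ_pos := div_pos hNθ hNπ
  have antiN := logSinRatio_antitoneOn hk1.le hk2
  have monoG := sq_div_sin_mul_logSinRatio_monotoneOn hk1.le hk2
  refine ⟨fun h => ⟨?_, ?_⟩, fun h => ⟨?_, ?_⟩⟩
  · exact (one_le_div hNπ).2 (antiN hθ hπ h.le)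
  · exact le_mul_of_one_le_right hQ_pos.le ((one_le_div hgθ).2 (monoG hθ hπ h.le))
  · exact mul_le_of_le_one_right hQ_pos.le ((div_le_one hgθ).2 (monoG hπ hθ h.le))
  · exact (div_le_one hNπ).2 (antiN hπ hθ h.le)
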